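/- Let k ≥ 2 and let G be a buoy with bags B1,…,B5 such that for each i mod 5 the induced subgraph on B_i is a k_i-critical (P5, P5-bar)-free graph, where k_1,…,k_5 are positive integers satisfying k_i + k_{i+1} ≤ k−1 for each i mod 5 and k_1 + k_2 + k_3 + k_4 + k_5 = 2k−1. Then G is a k-critical (P5, P5-bar)-free graph. -/

import Mathlib

open SimpleGraph

/-- A graph is `k`-critical if its chromatic number equals `k` and every proper
induced subgraph is `(k-1)`-colorable. -/
def IsKCritical {V : Type*} (G : SimpleGraph V) (k : ℕ) : Prop :=
  G.chromaticNumber = k ∧ ∀ s : Set V, s ≠ Set.univ → (G.induce s).Colorable (k - 1)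

/-- A set `X` of vertices is a module if every vertex outside `X` is adjacent
either to all vertices of `X` or to none of them. -/
def IsModule {V : Type*} (G : SimpleGraph V) (X : Set V) : Prop :=
  ∀ v ∉ X, (∀ x ∈ X, G.Adj v x) ∨ (∀ x ∈ X, ¬ G.Adj v x)

/-- `G` contains no induced subgraph isomorphic to `H`. -/
def InducedFree {V W : Type*} (G : SimpleGraph V) (H : SimpleGraph W) : Prop :=
  ¬ ∃ s : Set V, Nonempty ((G.induce s) ≃g H)

/-- `G` is (P5, P5-bar)-free. -/
def P5P5barFree {V : Type*} (G : SimpleGraph V) : Prop :=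
  InducedFree G (pathGraph 5) ∧ InducedFree G (pathGraph 5)ᶜ

/-- A buoy in `G` given by its five non-empty bags. -/
structure IsBuoy {V : Type*} (G : SimpleGraph V) (B : Fin 5 → Set V) : Prop where
  nonempty : ∀ i, (B i).Nonempty
  disjoint : ∀ i j, i ≠ j → Disjoint (B i) (B j)
  adj_next : ∀ i, ∀ x ∈ B i, ∀ y ∈ B (i + 1), G.Adj x y
  not_adj_skip : ∀ i, ∀ x ∈ B i, ∀ y ∈ B (i + 2), ¬ G.Adj x y

/-- `G` is a pseudo-buoy with (possibly empty) bags `B 0, …, B 4` partitioning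
its vertex set. -/
structure IsPseudoBuoy {V : Type*} (G : SimpleGraph V) (B : Fin 5 → Set V) : Prop where
  cover : (⋃ i, B i) = Set.univ
  disjoint : ∀ i j, i ≠ j → Disjoint (B i) (B j)
  adj_next : ∀ i, ∀ x ∈ B i, ∀ y ∈ B (i + 1), G.Adj x y
  not_adj_skip : ∀ i, ∀ x ∈ B i, ∀ y ∈ B (i + 2), ¬ G.Adj x y

/-- The graph obtained from `G` by substituting `H` for the module `M`. -/
def substitute {V W : Type*} (G : SimpleGraph V) (M : Set V) (H : SimpleGraph W) :
    SimpleGraph ({v : V // v ∉ M} ⊕ W) where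
  Adj x y :=
    match x, y with
    | Sum.inl a, Sum.inl b => G.Adj a b
    | Sum.inl a, Sum.inr _ => ∃ m ∈ M, G.Adj a m
    | Sum.inr _, Sum.inl b => ∃ m ∈ M, G.Adj b m
    | Sum.inr a, Sum.inr b => H.Adj a b
  symm := by
    constructor
    rintro (a | a) (b | b) h
    · exact G.adj_symm h
    · exact h
    · exact h
    · exact H.adj_symm h
  loopless := by
    constructor
    rintro (a | a) h
    · exact G.irrefl h
    · exact H.irrefl h

/-- The join of two graphs. -/
def joinGraph {V W : Type*} (G : SimpleGraph V) (H : SimpleGraph W) :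
    SimpleGraph (V ⊕ W) where
  Adj x y :=
    match x, y with
    | Sum.inl a, Sum.inl b => G.Adj a b
    | Sum.inl _, Sum.inr _ => True
    | Sum.inr _, Sum.inl _ => True
    | Sum.inr a, Sum.inr b => H.Adj a b
  symm := by
    constructor
    rintro (a | a) (b | b) h
    · exact G.adj_symm h
    · trivial
    · trivial
    · exact H.adj_symm h
  loopless := by
    constructor
    rintro (a | a) h
    · exact G.irrefl h
    · exact H.irrefl h


/-!
If the bags of a buoy are `cᵢ`-colourable with `cᵢ + cᵢ₊₁ ≤ m` and `∑ cᵢ = 2m`, give bag `Bᵢ` the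
cyclic interval of colours `[c₀ + ⋯ + cᵢ₋₁, c₀ + ⋯ + cᵢ)` modulo `m`: consecutive intervals are
disjoint, so this is a proper `m`-colouring. Deleting a vertex of `Bⱼ` lets `kⱼ` drop by one, so
with `m = k - 1` every proper induced subgraph of `G` is `(k - 1)`-colourable, whence `χ(G) ≤ k`.
Conversely a colour class meets at most two bags, and they are not consecutive, so
`2 χ(G) ≥ ∑ kᵢ = 2k - 1`.

Every bag is a module of `G`, and `P₅` and its complement are prime graphs other than `C₅`. So an
induced copy of either lies inside one bag or meets each bag at most once; in the latter case it
has one vertex in each bag and is a `C₅`.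
-/

namespace SimpleGraph

variable {V : Type*} {G : SimpleGraph V}

instance (n : ℕ) : DecidableRel (pathGraph n).Adj :=
  fun _ _ => decidable_of_iff _ pathGraph_adj.symm

theorem cycleGraph_adj_iff_eq_add_one {n : ℕ} {i j : Fin (n + 2)} :
    (cycleGraph (n + 2)).Adj i j ↔ j = i + 1 ∨ i = j + 1 := by
  rw [cycleGraph_adj, sub_eq_iff_eq_add, sub_eq_iff_eq_add, add_comm 1 j, add_comm 1 i, or_comm]

theorem Colorable.of_induce_compl {s : Set V} {n m : ℕ} (hs : (G.induce s).Colorable n)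
    (hsc : (G.induce sᶜ).Colorable m) : G.Colorable (n + m) := by
  classical
  obtain ⟨f⟩ := hs
  obtain ⟨g⟩ := hsc
  let c : G.Coloring (Fin n ⊕ Fin m) := Coloring.mk
    (fun v => if hv : v ∈ s then .inl (f ⟨v, hv⟩) else .inr (g ⟨v, hv⟩)) fun {u v} huv => by
      by_cases hu : u ∈ s <;> by_cases hv : v ∈ s <;> simp only [hu, hv, dite_true, dite_false,
        ne_eq, reduceCtorEq, Sum.inl.injEq, Sum.inr.injEq, not_false_eq_true]
      · exact f.valid huv
      · exact g.valid huv
  simpa using c.colorable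

def induceInduceSwap (s t : Set V) :
    (G.induce s).induce (Subtype.val ⁻¹' t) →g (G.induce t).induce (Subtype.val ⁻¹' s) where
  toFun x := ⟨⟨x.1.1, x.2⟩, x.1.2⟩
  map_rel' h := h

end SimpleGraph

open SimpleGraph Finset

theorem Nat.ModEq.not_add_modEq_add {m p q a b c d : ℕ} (hq : q ≡ p + c [MOD m]) (ha : a < c)
    (hb : b < d) (hcd : c + d ≤ m) : ¬ p + a ≡ q + b [MOD m] := by
  intro h
  have hmod : a ≡ c + b [MOD m] :=
    Nat.ModEq.add_left_cancel' p (h.trans (by simpa only [add_assoc] using hq.add_right b))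
  have := hmod.eq_of_lt_of_lt (by omega) (by omega)
  omega

theorem Fin.five_cases (i j : Fin 5) : j = i ∨ j = i + 1 ∨ i = j + 1 ∨ j = i + 2 ∨ i = j + 2 := by
  revert i j
  decide

/-- The independence number of `C₅` is `2`. -/
theorem Fin.card_le_two_of_forall_add_one_notMem (S : Finset (Fin 5))
    (hS : ∀ i ∈ S, i + 1 ∉ S) : #S ≤ 2 := by
  revert S
  decide

section Critical

variable {V : Type*} {G : SimpleGraph V} {k : ℕ}

theorem IsKCritical.colorable (h : IsKCritical G k) : G.Colorable k :=
  chromaticNumber_le_iff_colorable.mp h.1.le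

theorem IsKCritical.pos [Nonempty V] (h : IsKCritical G k) : 0 < k := by
  simpa [h.1] using h.colorable.chromaticNumber_pos

end Critical

section Modules

variable {V W : Type*} {G : SimpleGraph V} {X : Set V}

def IsPrimeGraph (G : SimpleGraph V) : Prop :=
  ∀ X : Set V, IsModule G X → X.Subsingleton ∨ X = Set.univ

theorem IsModule.preimage {H : SimpleGraph W} (f : H ↪g G) (hX : IsModule G X) :
    IsModule H (f ⁻¹' X) := by
  intro v hv
  rcases hX (f v) hv with h | h
  · exact Or.inl fun x hx => f.map_adj_iff.mp (h _ hx)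
  · exact Or.inr fun x hx hvx => h _ hx (f.map_adj_iff.mpr hvx)

theorem IsModule.compl (hX : IsModule G X) : IsModule Gᶜ X := by
  intro v hv
  have hne : ∀ x ∈ X, v ≠ x := fun x hx hvx => hv (hvx ▸ hx)
  rcases hX v hv with h | h
  · exact Or.inr fun x hx hvx => (compl_adj G v x).mp hvx |>.2 (h x hx)
  · exact Or.inl fun x hx => (compl_adj G v x).mpr ⟨hne x hx, h x hx⟩

theorem IsPrimeGraph.compl (hG : IsPrimeGraph G) : IsPrimeGraph Gᶜ :=
  fun X hX => hG X (by simpa using hX.compl)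

theorem isPrimeGraph_pathGraph_five : IsPrimeGraph (pathGraph 5) := by
  classical
  intro X hX
  have key : ∀ F : Finset (Fin 5), (∀ v ∉ F, (∀ x ∈ F, (pathGraph 5).Adj v x) ∨
      ∀ x ∈ F, ¬(pathGraph 5).Adj v x) → #F ≤ 1 ∨ F = univ := by
    decide
  rcases key X.toFinset (by simpa only [Set.mem_toFinset] using fun v hv => hX v hv) with h | h
  · exact Or.inl fun a ha b hb => card_le_one.mp h a (by simpa) b (by simpa)
  · exact Or.inr (Set.toFinset_eq_univ.mp h)

theorem isEmpty_pathGraph_five_iso_cycleGraph : IsEmpty (pathGraph 5 ≃g cycleGraph 5) :=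
  ⟨fun e => by have := e.card_edgeFinset_eq; revert this; decide⟩

theorem isEmpty_compl_pathGraph_five_iso_cycleGraph : IsEmpty ((pathGraph 5)ᶜ ≃g cycleGraph 5) :=
  ⟨fun e => by have := e.card_edgeFinset_eq; revert this; decide⟩

theorem inducedFree_iff_isEmpty_embedding {H : SimpleGraph W} :
    InducedFree G H ↔ IsEmpty (H ↪g G) := by
  refine ⟨fun hG => ⟨fun f => hG ⟨_, ⟨f.isoInduceRange.symm⟩⟩⟩, ?_⟩
  rintro hG ⟨s, ⟨e⟩⟩
  exact hG.false ((Embedding.induce s).comp e.symm.toEmbedding)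

end Modules

namespace IsPseudoBuoy

variable {V : Type*} {G : SimpleGraph V} {B : Fin 5 → Set V}

theorem exists_mem (h : IsPseudoBuoy G B) (v : V) : ∃ i, v ∈ B i :=
  Set.mem_iUnion.mp (h.cover ▸ Set.mem_univ v)

theorem induce (h : IsPseudoBuoy G B) (s : Set V) :
    IsPseudoBuoy (G.induce s) fun i => Subtype.val ⁻¹' B i where
  cover := by rw [← Set.preimage_iUnion, h.cover, Set.preimage_univ]
  disjoint i j hij := (h.disjoint i j hij).preimage _
  adj_next i x hx y hy := h.adj_next i x hx y hy
  not_adj_skip i x hx y hy := h.not_adj_skip i x hx y hy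

theorem adj_iff (h : IsPseudoBuoy G B) {i j : Fin 5} {x y : V} (hx : x ∈ B i) (hy : y ∈ B j)
    (hij : i ≠ j) : G.Adj x y ↔ (cycleGraph 5).Adj i j := by
  rw [cycleGraph_adj_iff_eq_add_one]
  rcases Fin.five_cases i j with rfl | rfl | rfl | rfl | rfl
  · exact absurd rfl hij
  · exact iff_of_true (h.adj_next i x hx y hy) (Or.inl rfl)
  · exact iff_of_true (h.adj_next j y hy x hx).symm (Or.inr rfl)
  · exact iff_of_false (h.not_adj_skip i x hx y hy) (by simp [add_assoc])
  · exact iff_of_false (fun hxy => h.not_adj_skip j y hy x hx hxy.symm) (by simp [add_assoc])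

theorem isModule (h : IsPseudoBuoy G B) (i : Fin 5) : IsModule G (B i) := by
  intro v hv
  obtain ⟨j, hj⟩ := h.exists_mem v
  have hji : j ≠ i := by rintro rfl; exact hv hj
  by_cases hadj : (cycleGraph 5).Adj j i
  · exact Or.inl fun x hx => (h.adj_iff hj hx hji).mpr hadj
  · exact Or.inr fun x hx => mt (h.adj_iff hj hx hji).mp hadj

theorem colorable (h : IsPseudoBuoy G B) {m : ℕ} {c : Fin 5 → ℕ}
    (hc : ∀ i, (G.induce (B i)).Colorable (c i)) (hpair : ∀ i, c i + c (i + 1) ≤ m)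
    (hsum : ∑ i, c i = 2 * m) : G.Colorable m := by
  classical
  choose bag hbag using h.exists_mem
  let f : Fin 5 → V → ℕ := fun i x => if hx : x ∈ B i then (hc i).some ⟨x, hx⟩ else 0
  have hf_lt : ∀ i x, x ∈ B i → f i x < c i := fun i x hx => by simp [f, hx]
  have hf_ne : ∀ i x y, x ∈ B i → y ∈ B i → G.Adj x y → f i x ≠ f i y := fun i x y hx hy hxy => by
    simpa [f, hx, hy, Fin.val_eq_val] using (hc i).some.valid (v := ⟨x, hx⟩) (w := ⟨y, hy⟩) hxy
  have hcm : ∀ i, c i ≤ m := fun i => (Nat.le_add_right _ _).trans (hpair i)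
  -- bag `i` gets the colours `p i, …, p i + c i - 1` modulo `m`
  let p : Fin 5 → ℕ := ![0, c 0, c 0 + c 1, c 0 + c 1 + c 2, c 0 + c 1 + c 2 + c 3]
  have hp : ∀ i, p (i + 1) ≡ p i + c i [MOD m] := by
    rw [Fin.sum_univ_five] at hsum
    intro i
    fin_cases i
    all_goals simp [p, Nat.ModEq, hsum]
  refine ⟨Coloring.mk (fun x => ⟨(p (bag x) + f (bag x) x) % m,
    Nat.mod_lt _ (Nat.zero_lt_of_lt ((hf_lt _ x (hbag x)).trans_le (hcm _)))⟩) ?_⟩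
  intro x y hxy
  simp only [ne_eq, Fin.mk.injEq]
  by_cases hij : bag x = bag y
  · rw [← hij]
    intro hxy'
    refine hf_ne _ x y (hbag x) (hij ▸ hbag y) hxy
      ((Nat.ModEq.add_left_cancel' _ hxy').eq_of_lt_of_lt ?_ ?_)
    · exact (hf_lt _ x (hbag x)).trans_le (hcm _)
    · exact (hf_lt _ y (hij ▸ hbag y)).trans_le (hcm _)
  rcases cycleGraph_adj_iff_eq_add_one.mp ((h.adj_iff (hbag x) (hbag y) hij).mp hxy) with hj | hi
  · rw [hj]
    exact (hp _).not_add_modEq_add (hf_lt _ x (hbag x)) (hf_lt _ y (hj ▸ hbag y)) (hpair _)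
  · rw [hi]
    exact Ne.symm <|
      (hp _).not_add_modEq_add (hf_lt _ y (hbag y)) (hf_lt _ x (hi ▸ hbag x)) (hpair _)

theorem sum_chromaticNumber_le (h : IsPseudoBuoy G B) {n : ℕ} (hG : G.Colorable n) :
    ∑ i, (G.induce (B i)).chromaticNumber ≤ 2 * n := by
  classical
  obtain ⟨φ⟩ := hG
  let r : Fin 5 → Fin n → Prop := fun i α => ∃ x ∈ B i, φ x = α
  have hbag : ∀ i, (G.induce (B i)).chromaticNumber ≤ #(univ.bipartiteAbove r i) := by
    intro i
    let ψ : (G.induce (B i)).Coloring (univ.bipartiteAbove r i) :=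
      Coloring.mk (fun x => ⟨φ x, by simpa [r] using ⟨x, x.2, rfl⟩⟩) fun hxy => by
        simpa using φ.valid hxy
    simpa only [Fintype.card_coe] using ψ.colorable.chromaticNumber_le
  have hcolour : ∀ α, #(univ.bipartiteBelow r α) ≤ 2 := by
    intro α
    refine Fin.card_le_two_of_forall_add_one_notMem _ fun i hi hi' => ?_
    obtain ⟨x, hx, rfl⟩ := (mem_bipartiteBelow _).mp hi |>.2
    obtain ⟨y, hy, hxy⟩ := (mem_bipartiteBelow _).mp hi' |>.2
    exact φ.valid (h.adj_next i x hx y hy) hxy.symm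
  calc ∑ i, (G.induce (B i)).chromaticNumber
      ≤ ((∑ i, #(univ.bipartiteAbove r i) : ℕ) : ℕ∞) := by
        push_cast
        exact sum_le_sum fun i _ => hbag i
    _ = ((∑ α, #(univ.bipartiteBelow r α) : ℕ) : ℕ∞) := by
        rw [sum_card_bipartiteAbove_eq_sum_card_bipartiteBelow]
    _ ≤ 2 * n := by
        have := sum_le_sum fun α (_ : α ∈ univ) => hcolour α
        simp only [sum_const, card_univ, Fintype.card_fin, smul_eq_mul] at this
        exact_mod_cast this.trans_eq (mul_comm _ _)

theorem inducedFree (h : IsPseudoBuoy G B) {H : SimpleGraph (Fin 5)} (hH : IsPrimeGraph H)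
    (hC : IsEmpty (H ≃g cycleGraph 5)) (hbags : ∀ i, InducedFree (G.induce (B i)) H) :
    InducedFree G H := by
  simp only [inducedFree_iff_isEmpty_embedding] at hbags ⊢
  refine ⟨fun f => ?_⟩
  have hmod : ∀ i, (f ⁻¹' B i).Subsingleton ∨ f ⁻¹' B i = Set.univ :=
    fun i => hH _ ((h.isModule i).preimage f)
  by_cases hall : ∃ i, f ⁻¹' B i = Set.univ
  · obtain ⟨i, hi⟩ := hall
    have hrange : Set.range f ≤ B i :=
      Set.range_subset_iff.mpr fun a => Set.eq_univ_iff_forall.mp hi a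
    exact (hbags i).false ((G.induceHomOfLE hrange).comp f.isoInduceRange.toEmbedding)
  push Not at hall
  choose bag hbag using fun a => h.exists_mem (f a)
  have hinj : Function.Injective bag := fun a b hab =>
    (hmod (bag a)).resolve_right (hall _) (hbag a) (hab ▸ hbag b)
  refine hC.false ⟨Equiv.ofBijective bag (Finite.injective_iff_bijective.mp hinj), ?_⟩
  intro a b
  rcases eq_or_ne a b with rfl | hab
  · simp
  · exact (f.map_adj_iff.symm.trans (h.adj_iff (hbag a) (hbag b) (hinj.ne hab))).symm

theorem colorable_induce_of_ne_univ (h : IsPseudoBuoy G B) {κ : Fin 5 → ℕ} {k : ℕ}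
    (hcrit : ∀ i, IsKCritical (G.induce (B i)) (κ i)) (hpair : ∀ i, κ i + κ (i + 1) ≤ k - 1)
    (hsum : ∑ i, κ i = 2 * k - 1) {s : Set V} (hs : s ≠ Set.univ) :
    (G.induce s).Colorable (k - 1) := by
  classical
  obtain ⟨v, hv⟩ := (Set.ne_univ_iff_exists_notMem s).mp hs
  obtain ⟨j, hj⟩ := h.exists_mem v
  have hκj : 0 < κ j := by
    have : Nonempty (B j) := ⟨⟨v, hj⟩⟩
    exact (hcrit j).pos
  let c := Function.update κ j (κ j - 1)
  have hcκ : ∀ i, c i ≤ κ i := fun i => by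
    rcases eq_or_ne i j with rfl | hi <;> simp [c, *]
  refine (h.induce s).colorable (c := c) (fun i => .of_hom (induceInduceSwap _ _) ?_)
    (fun i => (add_le_add (hcκ i) (hcκ _)).trans (hpair i)) ?_
  · rcases eq_or_ne i j with rfl | hi
    · simpa [c] using (hcrit i).2 _ fun hu => hv (Set.eq_univ_iff_forall.mp hu ⟨v, hj⟩)
    · simpa [c, hi] using (hcrit i).colorable.of_hom (Embedding.induce _).toHom
  · rw [sum_update_of_mem (mem_univ j)]
    rw [sum_eq_add_sum_sdiff_singleton_of_mem (mem_univ j)] at hsum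
    omega

end IsPseudoBuoy

theorem buoy_construction_critical_general {V : Type*}
    (G : SimpleGraph V) (k : ℕ)
    (B : Fin 5 → Set V) (hbuoy : IsBuoy G B) (hcover : (⋃ i, B i) = Set.univ)
    (κ : Fin 5 → ℕ)
    (hcrit : ∀ i, IsKCritical (G.induce (B i)) (κ i))
    (hfree : ∀ i, P5P5barFree (G.induce (B i)))
    (hpair : ∀ i : Fin 5, κ i + κ (i + 1) ≤ k - 1)
    (hsum : ∑ i, κ i = 2 * k - 1) :
    IsKCritical G k ∧ P5P5barFree G := by
  have hB : IsPseudoBuoy G B := ⟨hcover, hbuoy.disjoint, hbuoy.adj_next, hbuoy.not_adj_skip⟩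
  obtain ⟨v, hv⟩ := hbuoy.nonempty 0
  have hk : 0 < k := by
    have : Nonempty (B 0) := ⟨⟨v, hv⟩⟩
    have := (hcrit 0).pos.trans_le (single_le_sum (fun i _ => Nat.zero_le (κ i)) (mem_univ 0))
    omega
  have hcol (s : Set V) (hs : s ≠ Set.univ) : (G.induce s).Colorable (k - 1) :=
    hB.colorable_induce_of_ne_univ hcrit hpair hsum hs
  have hG : G.Colorable k := by
    have hv1 : (G.induce {v}ᶜᶜ).Colorable 1 := by
      rw [compl_compl, ← chromaticNumber_le_iff_colorable]
      exact chromaticNumber_le_one_of_subsingleton _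
    simpa [Nat.sub_add_cancel hk] using (hcol {v}ᶜ (by simp)).of_induce_compl hv1
  have hlow : (k : ℕ∞) ≤ G.chromaticNumber := le_chromaticNumber_iff_colorable.mpr fun n hn => by
    have := hB.sum_chromaticNumber_le hn
    rw [sum_congr rfl fun i _ => (hcrit i).1] at this
    have : ∑ i, κ i ≤ 2 * n := by exact_mod_cast this
    exact_mod_cast (by omega : k ≤ n)
  exact ⟨⟨le_antisymm hG.chromaticNumber_le hlow, hcol⟩,
    hB.inducedFree isPrimeGraph_pathGraph_five isEmpty_pathGraph_five_iso_cycleGraph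
      fun i => (hfree i).1,
    hB.inducedFree isPrimeGraph_pathGraph_five.compl isEmpty_compl_pathGraph_five_iso_cycleGraph
      fun i => (hfree i).2⟩

/-- Construction 2: a buoy whose bags are `kᵢ`-critical (P5, P5-bar)-free
graphs, with `kᵢ + kᵢ₊₁ ≤ k - 1` and `∑ kᵢ = 2k - 1`, is a `k`-critical
(P5, P5-bar)-free graph. -/
theorem buoy_construction_critical {V : Type*} [Fintype V]
    (G : SimpleGraph V) (k : ℕ) (hk : 2 ≤ k)
    (B : Fin 5 → Set V) (hbuoy : IsBuoy G B) (hcover : (⋃ i, B i) = Set.univ)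
    (κ : Fin 5 → ℕ) (hκpos : ∀ i, 1 ≤ κ i)
    (hcrit : ∀ i, IsKCritical (G.induce (B i)) (κ i))
    (hfree : ∀ i, P5P5barFree (G.induce (B i)))
    (hpair : ∀ i : Fin 5, κ i + κ (i + 1) ≤ k - 1)
    (hsum : ∑ i, κ i = 2 * k - 1) :
    IsKCritical G k ∧ P5P5barFree G :=
  buoy_construction_critical_general G k B hbuoy hcover κ hcrit hfree hpair hsum
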